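/- The map P := Wig ∘ Op on functions (ZMod 2d)² → ℂ is an orthogonal projector with respect to the inner product ⟨f,g⟩ := Σ_m conj(f(m))·g(m): it is idempotent, P(P f) = P f for all f, and self-adjoint, ⟨P f, g⟩ = ⟨f, P g⟩ for all f, g. -/

import Mathlib

open scoped BigOperators
open Matrix

noncomputable section

/-- `omega n a = exp(2πi a / n)`, the `n`-th roots of unity raised to integer power `a`. -/
def omega (n : ℕ) (a : ℤ) : ℂ := Complex.exp (2 * Real.pi * Complex.I * a / n)

/-- `Zpow d k = Σ_j ω_d^(k·j) |j⟩⟨j|`, the `k`-th power of the clock operator. -/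
def Zpow (d : ℕ) (k : ℤ) : Matrix (ZMod d) (ZMod d) ℂ :=
  Matrix.of fun i j => if i = j then omega d (k * (j.val : ℤ)) else 0

/-- `Xpow d k = Σ_j |j+k⟩⟨j|`, the `k`-th power of the shift operator. -/
def Xpow (d : ℕ) (k : ℤ) : Matrix (ZMod d) (ZMod d) ℂ :=
  Matrix.of fun i j => if i = j + (k : ZMod d) then 1 else 0

/-- The Weyl–Heisenberg displacement operator `V(k) = ω_{2d}^{-k₁k₂} Z^{k₂} X^{k₁}` for `k ∈ ℤ²`. -/
def Vint (d : ℕ) [NeZero d] (k : ℤ × ℤ) : Matrix (ZMod d) (ZMod d) ℂ :=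
  omega (2 * d) (-(k.1 * k.2)) • (Zpow d k.2 * Xpow d k.1)

/-- The WHDO on the doubled phase space `(ZMod (2d))²`. -/
def V (d : ℕ) [NeZero d] (m : ZMod (2 * d) × ZMod (2 * d)) : Matrix (ZMod d) (ZMod d) ℂ :=
  Vint d ((m.1.val : ℤ), (m.2.val : ℤ))

/-- Discrete parity operator `R = Σ_j |-j⟩⟨j|`. -/
def R (d : ℕ) : Matrix (ZMod d) (ZMod d) ℂ :=
  Matrix.of fun i j => if i = -j then 1 else 0

/-- Doubled phase-point operator `A(m) = V(m)·R`. -/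
def A (d : ℕ) [NeZero d] (m : ZMod (2 * d) × ZMod (2 * d)) : Matrix (ZMod d) (ZMod d) ℂ :=
  V d m * R d

variable (d : ℕ) [NeZero d]

/-- Doubled Wigner transform: `Wig[O](m) = (1/(2d)) Tr(A(m)† O)`. -/
def Wig (O : Matrix (ZMod d) (ZMod d) ℂ) (m : ZMod (2 * d) × ZMod (2 * d)) : ℂ :=
  (1 / (2 * (d : ℂ))) * ((A d m)ᴴ * O).trace

/-- Doubled Weyl transform: `Op[f] = (1/2) Σ_m f(m) A(m)`. -/
def OpW (f : ZMod (2 * d) × ZMod (2 * d) → ℂ) : Matrix (ZMod d) (ZMod d) ℂ :=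
  (1 / 2 : ℂ) • ∑ m : ZMod (2 * d) × ZMod (2 * d), f m • A d m

/-- The projector `P = Wig ∘ Op` on functions on the doubled phase space. -/
def P (f : ZMod (2 * d) × ZMod (2 * d) → ℂ) : ZMod (2 * d) × ZMod (2 * d) → ℂ :=
  Wig d (OpW d f)

/-- Inner product on functions on the doubled phase space. -/
def ip (f g : ZMod (2 * d) × ZMod (2 * d) → ℂ) : ℂ :=
  ∑ m : ZMod (2 * d) × ZMod (2 * d), (starRingEnd ℂ) (f m) * g m

/-- Cross-correlation `(f ⋆ g)(m) = Σ_{m'} conj(f m') g(m'+m)`. -/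
def crossCor (f g : ZMod (2 * d) × ZMod (2 * d) → ℂ) (m : ZMod (2 * d) × ZMod (2 * d)) : ℂ :=
  ∑ m' : ZMod (2 * d) × ZMod (2 * d), (starRingEnd ℂ) (f m') * g (m' + m)

/-- The doubling map `ZMod d → ZMod (2d)`, `a ↦ 2a`. -/
def dbl (a : ZMod d) : ZMod (2 * d) := ((2 * a.val : ℕ) : ZMod (2 * d))

/-- The doubling map on the phase space. -/
def dbl2 (α : ZMod d × ZMod d) : ZMod (2 * d) × ZMod (2 * d) := (dbl d α.1, dbl d α.2)

/-- A stencil `M` is valid if its projection `M̄ = P M` is real-valued (M1),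
sums to 1 (M2), and satisfies the autocorrelation condition (M3). -/
def IsValidStencil (M : ZMod (2 * d) × ZMod (2 * d) → ℂ) : Prop :=
  (∀ m, (starRingEnd ℂ) (P d M m) = P d M m) ∧
  (∑ m : ZMod (2 * d) × ZMod (2 * d), P d M m) = 1 ∧
  (∀ α : ZMod d × ZMod d,
    crossCor d (P d M) (P d M) (dbl2 d α) = if α = 0 then 1 else 0)

/-- The `M`-PPO frame generated by a stencil `M`:
`A^M(α) = (1/2) Σ_{m'} M(m') A(m' + 2α)`. -/
def AM (M : ZMod (2 * d) × ZMod (2 * d) → ℂ) (α : ZMod d × ZMod d) :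
    Matrix (ZMod d) (ZMod d) ℂ :=
  (1 / 2 : ℂ) • ∑ m' : ZMod (2 * d) × ZMod (2 * d), M m' • A d (m' + dbl2 d α)

/-- A family of phase-point operators on `(ZMod d)²` is a valid PPO frame if it is
Hermitian (A1), trace-1 (A2), orthogonal (A3), and WHDO-covariant (A4). -/
def IsValidPPOFrame (B : ZMod d × ZMod d → Matrix (ZMod d) (ZMod d) ℂ) : Prop :=
  (∀ α, (B α)ᴴ = B α) ∧
  (∀ α, (B α).trace = 1) ∧
  (∀ α β, ((B α)ᴴ * B β).trace = if α = β then (d : ℂ) else 0) ∧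
  (∀ (k : ℤ × ℤ) (α : ZMod d × ZMod d),
    Vint d k * B α * (Vint d k)ᴴ = B (α + ((k.1 : ZMod d), (k.2 : ZMod d))))

/-- The `M`-Wigner transform: `Wig^M[O](α) = (1/d) Tr(A^M(α)† O)`. -/
def WigM (M : ZMod (2 * d) × ZMod (2 * d) → ℂ) (O : Matrix (ZMod d) (ZMod d) ℂ)
    (α : ZMod d × ZMod d) : ℂ :=
  (1 / (d : ℂ)) * ((AM d M α)ᴴ * O).trace

/-- The `M`-Weyl transform: `Op^M[f] = Σ_α f(α) A^M(α)`. -/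
def OpM (M : ZMod (2 * d) × ZMod (2 * d) → ℂ) (f : ZMod d × ZMod d → ℂ) :
    Matrix (ZMod d) (ZMod d) ℂ :=
  ∑ α : ZMod d × ZMod d, f α • AM d M α

/-- The symplectic discrete Fourier transform. -/
def SDFT (f : ZMod (2 * d) × ZMod (2 * d) → ℂ) (m : ZMod (2 * d) × ZMod (2 * d)) : ℂ :=
  (1 / (2 * (d : ℂ))) * ∑ m' : ZMod (2 * d) × ZMod (2 * d),
    omega (2 * d) (-((m.1.val : ℤ) * (m'.2.val : ℤ) - (m.2.val : ℤ) * (m'.1.val : ℤ))) * f m'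


/-- Coarse-grain-stencil PPO frame: `B(α) = (1/2) Σ_{b∈{0,1}²} A(2α + b)`. -/
def Bcgs (α : ZMod d × ZMod d) : Matrix (ZMod d) (ZMod d) ℂ :=
  (1 / 2 : ℂ) • ∑ b : ZMod 2 × ZMod 2,
    A d (dbl d α.1 + (b.1.val : ZMod (2 * d)), dbl d α.2 + (b.2.val : ZMod (2 * d)))

/-- Momentum basis state `|p⟩ = (1/√d) Σ_j ω_d^{p j} |j⟩`. -/
def pvec (p : ZMod d) : ZMod d → ℂ :=
  fun j => (1 / ((Real.sqrt d : ℝ) : ℂ)) * omega d ((p.val : ℤ) * (j.val : ℤ))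

/-- One-dimensional Dirichlet kernel `K(m) = (1/d) Σ_{t=-(d-1)/2}^{(d-1)/2} ω_{2d}^{t m}`. -/
def Kdir (m : ZMod (2 * d)) : ℂ :=
  (1 / (d : ℂ)) * ∑ t ∈ Finset.Icc (-(((d : ℤ) - 1) / 2)) (((d : ℤ) - 1) / 2),
    omega (2 * d) (t * (m.val : ℤ))

end

noncomputable section AuxProof

lemma omega_add' (n : ℕ) (a b : ℤ) : omega n (a + b) = omega n a * omega n b := by
  rw [omega, omega, omega, ← Complex.exp_add]
  congr 1
  push_cast
  ring

lemma omega_conj (n : ℕ) (a : ℤ) : (starRingEnd ℂ) (omega n a) = omega n (-a) := by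
  rw [omega, omega, ← Complex.exp_conj]
  congr 1
  simp only [map_div₀, _root_.map_mul, Complex.conj_I, Complex.conj_ofReal, map_ofNat,
    map_intCast, map_natCast]
  push_cast
  ring

lemma omega_pow' (n : ℕ) (a : ℤ) (k : ℕ) : omega n (a * k) = omega n a ^ k := by
  rw [omega, omega, ← Complex.exp_nat_mul]
  congr 1
  push_cast
  ring

lemma omega_eq_one' (n : ℕ) (hn : n ≠ 0) (a : ℤ) (h : (n : ℤ) ∣ a) : omega n a = 1 := by
  obtain ⟨k, rfl⟩ := h
  rw [omega]
  have hn' : (n : ℂ) ≠ 0 := Nat.cast_ne_zero.mpr hn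
  have : 2 * (Real.pi : ℂ) * Complex.I * ((n : ℤ) * k : ℤ) / n = (k : ℤ) * (2 * Real.pi * Complex.I) := by
    push_cast
    field_simp
  rw [this, Complex.exp_int_mul_two_pi_mul_I]

lemma omega_ne_one' (n : ℕ) (hn : n ≠ 0) (a : ℤ) (h : ¬ (n : ℤ) ∣ a) : omega n a ≠ 1 := by
  intro h1
  rw [omega, Complex.exp_eq_one_iff] at h1
  obtain ⟨m, hm⟩ := h1
  apply h
  refine ⟨m, ?_⟩
  have hn' : (n : ℂ) ≠ 0 := Nat.cast_ne_zero.mpr hn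
  have hpi : (2 : ℂ) * Real.pi * Complex.I ≠ 0 := by
    simp [Real.pi_ne_zero, Complex.I_ne_zero, Complex.ofReal_ne_zero]
  have : (a : ℂ) = (n : ℂ) * m := by
    field_simp at hm
    have := hm
    -- hm : 2 * π * I * a = m * (2 * π * I) * n
    have h2 : (2 : ℂ) * Real.pi * Complex.I * a = 2 * Real.pi * Complex.I * (n * m) := by
      rw [hm]
    exact mul_left_cancel₀ hpi h2
  exact_mod_cast this

lemma omega_mul_self_conj (n : ℕ) (a : ℤ) :
    (starRingEnd ℂ) (omega n a) * omega n a = 1 := by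
  rw [omega_conj, ← omega_add']
  simp [omega]

variable (d : ℕ) [NeZero d]

lemma sum_om (c : ℤ) :
    ∑ m : ZMod (2 * d), omega d ((m.val : ℤ) * c) = if (d : ℤ) ∣ c then (2 * (d : ℂ)) else 0 := by
  have hd : d ≠ 0 := NeZero.ne d
  have h2d : 2 * d ≠ 0 := by omega
  haveI : NeZero (2 * d) := ⟨h2d⟩
  have hval : ∀ m : ZMod (2 * d), omega d ((m.val : ℤ) * c) = omega d c ^ m.val := by
    intro m
    rw [mul_comm, omega_pow']
  simp_rw [hval]
  have hrange : ∑ m : ZMod (2 * d), omega d c ^ m.val = ∑ j ∈ Finset.range (2 * d), omega d c ^ j := by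
    refine Finset.sum_nbij' (fun m => m.val) (fun j => (j : ZMod (2 * d))) ?_ ?_ ?_ ?_ ?_
    · intro m _; exact Finset.mem_range.mpr (ZMod.val_lt m)
    · intro j _; exact Finset.mem_univ _
    · intro m _; simp [ZMod.natCast_val, ZMod.cast_id]
    · intro j hj; exact ZMod.val_cast_of_lt (Finset.mem_range.mp hj)
    · intro m _; rfl
  rw [hrange]
  by_cases h : (d : ℤ) ∣ c
  · rw [omega_eq_one' d hd c h, if_pos h]
    simp only [one_pow, Finset.sum_const, Finset.card_range, nsmul_eq_mul, mul_one]
    push_cast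
    ring
  · rw [if_neg h]
    have hne : omega d c ≠ 1 := omega_ne_one' d hd c h
    rw [geom_sum_eq hne]
    have : omega d c ^ (2 * d) = 1 := by
      rw [← omega_pow']
      refine omega_eq_one' d hd _ ⟨2 * c, ?_⟩
      push_cast
      ring
    rw [this]
    simp

lemma count_fiber (x : ZMod d) :
    ∑ m : ZMod (2 * d), (if ((m.val : ZMod d) = x) then (1 : ℂ) else 0) = 2 := by
  have hd : d ≠ 0 := NeZero.ne d
  have h2d : 2 * d ≠ 0 := by omega
  haveI : NeZero (2 * d) := ⟨h2d⟩
  have hrange : ∑ m : ZMod (2 * d), (if ((m.val : ZMod d) = x) then (1 : ℂ) else 0)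
      = ∑ j ∈ Finset.range (2 * d), (if (((j : ℕ) : ZMod d) = x) then (1 : ℂ) else 0) := by
    refine Finset.sum_nbij' (fun m => m.val) (fun j => (j : ZMod (2 * d))) ?_ ?_ ?_ ?_ ?_
    · intro m _; exact Finset.mem_range.mpr (ZMod.val_lt m)
    · intro j _; exact Finset.mem_univ _
    · intro m _; simp [ZMod.natCast_val, ZMod.cast_id]
    · intro j hj; exact ZMod.val_cast_of_lt (Finset.mem_range.mp hj)
    · intro m _; rfl
  rw [hrange, ← Finset.sum_filter]
  have hfil : (Finset.range (2 * d)).filter (fun j => ((j : ℕ) : ZMod d) = x) = {x.val, x.val + d} := by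
    ext j
    simp only [Finset.mem_filter, Finset.mem_range, Finset.mem_insert, Finset.mem_singleton]
    constructor
    · rintro ⟨hj, hx⟩
      rw [ZMod.natCast_eq_iff] at hx
      obtain ⟨k, hk⟩ := hx
      have hxv : x.val < d := ZMod.val_lt x
      have hk2 : k < 2 := by
        by_contra hk2
        push_neg at hk2
        have : d * 2 ≤ d * k := Nat.mul_le_mul_left d hk2
        omega
      interval_cases k <;> omega
    · rintro (rfl | rfl)
      · exact ⟨by have := ZMod.val_lt x; omega, by simp [ZMod.natCast_val, ZMod.cast_id]⟩
      · refine ⟨by have := ZMod.val_lt x; omega, ?_⟩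
        push_cast
        simp [ZMod.natCast_val, ZMod.cast_id, ZMod.natCast_self]
  rw [hfil]
  have hne : x.val ≠ x.val + d := by omega
  rw [Finset.sum_insert (by simp [hne, hd]), Finset.sum_singleton]
  norm_num

lemma A_entry (m : ZMod (2 * d) × ZMod (2 * d)) (i j : ZMod d) :
    A d m i j = omega (2 * d) (-((m.1.val : ℤ) * (m.2.val : ℤ))) * omega d ((m.2.val : ℤ) * (i.val : ℤ))
      * (if i + j = ((m.1.val : ℕ) : ZMod d) then 1 else 0) := by
  have hVR : A d m i j = V d m i (-j) := by
    rw [A, Matrix.mul_apply]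
    rw [Finset.sum_eq_single (-j) (fun b _ hb => by simp [R, hb])
      (fun h => absurd (Finset.mem_univ _) h)]
    simp [R]
  have hZX : (Zpow d ((m.2.val : ℤ)) * Xpow d ((m.1.val : ℤ))) i (-j)
      = omega d ((m.2.val : ℤ) * (i.val : ℤ))
        * (if i = -j + (((m.1.val : ℤ) : ℤ) : ZMod d) then 1 else 0) := by
    rw [Matrix.mul_apply]
    rw [Finset.sum_eq_single i (fun b _ hb => by simp [Zpow, Ne.symm hb])
      (fun h => absurd (Finset.mem_univ _) h)]
    simp only [Zpow, Xpow, Matrix.of_apply, if_pos rfl, if_true]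
  rw [hVR, V, Vint, Matrix.smul_apply, hZX, smul_eq_mul]
  have hcast : (((m.1.val : ℤ) : ℤ) : ZMod d) = ((m.1.val : ℕ) : ZMod d) := by push_cast; rfl
  rw [hcast]
  have hcond : (i = -j + ((m.1.val : ℕ) : ZMod d)) ↔ (i + j = ((m.1.val : ℕ) : ZMod d)) := by
    constructor
    · intro h; rw [h]; ring
    · intro h; rw [← h]; ring
  by_cases h : i + j = ((m.1.val : ℕ) : ZMod d)
  · rw [if_pos (hcond.mpr h), if_pos h]
    ring
  · rw [if_neg (fun hc => h (hcond.mp hc)), if_neg h]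
    ring

lemma A_complete (i j k l : ZMod d) :
    ∑ m : ZMod (2 * d) × ZMod (2 * d), (starRingEnd ℂ) (A d m i j) * A d m k l
      = if i = k ∧ j = l then (4 * (d : ℂ)) else 0 := by
  have hd : d ≠ 0 := NeZero.ne d
  have hterm : ∀ m : ZMod (2 * d) × ZMod (2 * d),
      (starRingEnd ℂ) (A d m i j) * A d m k l
      = ((if i + j = ((m.1.val : ℕ) : ZMod d) then 1 else 0) * (if k + l = ((m.1.val : ℕ) : ZMod d) then 1 else 0))
        * omega d ((m.2.val : ℤ) * ((k.val : ℤ) - (i.val : ℤ))) := by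
    intro m
    rw [A_entry, A_entry]
    simp only [_root_.map_mul]
    rw [omega_conj, omega_conj]
    have hind : (starRingEnd ℂ) (if i + j = ((m.1.val : ℕ) : ZMod d) then (1:ℂ) else 0)
        = (if i + j = ((m.1.val : ℕ) : ZMod d) then (1:ℂ) else 0) := by
      split <;> simp
    rw [hind]
    have hcancel : omega (2*d) (-(-((m.1.val : ℤ) * (m.2.val : ℤ)))) * omega (2*d) (-((m.1.val : ℤ) * (m.2.val : ℤ))) = 1 := by
      rw [← omega_add']
      simp [omega]
    have homega : omega d (-((m.2.val : ℤ) * (i.val : ℤ))) * omega d ((m.2.val : ℤ) * (k.val : ℤ))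
        = omega d ((m.2.val : ℤ) * ((k.val : ℤ) - (i.val : ℤ))) := by
      rw [← omega_add']
      congr 1
      ring
    calc (omega (2*d) (-(-((m.1.val : ℤ) * (m.2.val : ℤ)))) * omega d (-((m.2.val : ℤ) * (i.val : ℤ)))
            * (if i + j = ((m.1.val : ℕ) : ZMod d) then (1:ℂ) else 0))
          * (omega (2*d) (-((m.1.val : ℤ) * (m.2.val : ℤ))) * omega d ((m.2.val : ℤ) * (k.val : ℤ))
            * (if k + l = ((m.1.val : ℕ) : ZMod d) then (1:ℂ) else 0))
        = (omega (2*d) (-(-((m.1.val : ℤ) * (m.2.val : ℤ)))) * omega (2*d) (-((m.1.val : ℤ) * (m.2.val : ℤ))))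
          * (omega d (-((m.2.val : ℤ) * (i.val : ℤ))) * omega d ((m.2.val : ℤ) * (k.val : ℤ)))
          * ((if i + j = ((m.1.val : ℕ) : ZMod d) then (1:ℂ) else 0) * (if k + l = ((m.1.val : ℕ) : ZMod d) then (1:ℂ) else 0)) := by ring
      _ = ((if i + j = ((m.1.val : ℕ) : ZMod d) then (1:ℂ) else 0) * (if k + l = ((m.1.val : ℕ) : ZMod d) then (1:ℂ) else 0))
          * omega d ((m.2.val : ℤ) * ((k.val : ℤ) - (i.val : ℤ))) := by
          rw [hcancel, homega]; ring
  have hthis : ∑ m : ZMod (2*d) × ZMod (2*d),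
      (starRingEnd ℂ) (A d m i j) * A d m k l
      = (∑ m1 : ZMod (2 * d), (if i + j = ((m1.val : ℕ) : ZMod d) then (1:ℂ) else 0) * (if k + l = ((m1.val : ℕ) : ZMod d) then (1:ℂ) else 0))
        * (∑ m2 : ZMod (2 * d), omega d ((m2.val : ℤ) * ((k.val : ℤ) - (i.val : ℤ)))) := by
    rw [Finset.sum_mul_sum, Fintype.sum_prod_type]
    exact Finset.sum_congr rfl fun m1 _ => Finset.sum_congr rfl fun m2 _ => hterm (m1, m2)
  rw [hthis, sum_om]
  have hdvd : ((d : ℤ) ∣ ((k.val : ℤ) - (i.val : ℤ))) ↔ i = k := by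
    rw [← ZMod.intCast_zmod_eq_zero_iff_dvd]
    push_cast
    rw [ZMod.natCast_val, ZMod.natCast_val, ZMod.cast_id, ZMod.cast_id, sub_eq_zero, eq_comm]
  by_cases hik : i = k
  · rw [if_pos (hdvd.mpr hik)]
    subst hik
    by_cases hjl : j = l
    · subst hjl
      rw [if_pos ⟨rfl, rfl⟩]
      have : ∀ m1 : ZMod (2 * d), (if i + j = ((m1.val : ℕ) : ZMod d) then (1:ℂ) else 0) * (if i + j = ((m1.val : ℕ) : ZMod d) then (1:ℂ) else 0)
          = (if ((m1.val : ℕ) : ZMod d) = i + j then (1:ℂ) else 0) := by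
        intro m1
        by_cases h : i + j = ((m1.val : ℕ) : ZMod d)
        · rw [if_pos h, if_pos h.symm]
          norm_num
        · rw [if_neg h, if_neg (fun hc => h hc.symm)]
          norm_num
      simp_rw [this]
      rw [count_fiber]
      ring
    · rw [if_neg (by tauto)]
      have : ∀ m1 : ZMod (2 * d), (if i + j = ((m1.val : ℕ) : ZMod d) then (1:ℂ) else 0) * (if i + l = ((m1.val : ℕ) : ZMod d) then (1:ℂ) else 0) = 0 := by
        intro m1
        by_cases h1 : i + j = ((m1.val : ℕ) : ZMod d)
        · rw [if_pos h1, if_neg (fun h2 => hjl (add_left_cancel (h1.trans h2.symm)))]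
          norm_num
        · rw [if_neg h1]
          norm_num
      simp_rw [this]
      simp
  · rw [if_neg (fun h => hik (hdvd.mp h)), if_neg (by tauto)]
    ring

lemma opW_wig (O : Matrix (ZMod d) (ZMod d) ℂ) : OpW d (Wig d O) = O := by
  have hd : (d : ℂ) ≠ 0 := Nat.cast_ne_zero.mpr (NeZero.ne d)
  ext k l
  rw [OpW]
  simp only [Matrix.smul_apply, Matrix.sum_apply, smul_eq_mul]
  have htr : ∀ m : ZMod (2 * d) × ZMod (2 * d),
      ((A d m)ᴴ * O).trace = ∑ p : ZMod d, ∑ q : ZMod d, (starRingEnd ℂ) (A d m p q) * O p q := by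
    intro m
    rw [Matrix.trace]
    simp only [Matrix.diag_apply, Matrix.mul_apply, Matrix.conjTranspose_apply]
    rw [Finset.sum_comm]
    exact Finset.sum_congr rfl fun p _ => Finset.sum_congr rfl fun q _ => by rw [RCLike.star_def]
  have step : ∀ m : ZMod (2 * d) × ZMod (2 * d),
      Wig d O m * A d m k l
      = (1 / (2 * (d : ℂ))) * ∑ p : ZMod d, ∑ q : ZMod d,
          O p q * ((starRingEnd ℂ) (A d m p q) * A d m k l) := by
    intro m
    rw [Wig, htr m, mul_assoc]
    congr 1
    rw [Finset.sum_mul]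
    refine Finset.sum_congr rfl fun p _ => ?_
    rw [Finset.sum_mul]
    exact Finset.sum_congr rfl fun q _ => by ring
  simp_rw [step]
  rw [← Finset.mul_sum]
  have hswap : ∑ m : ZMod (2 * d) × ZMod (2 * d), ∑ p : ZMod d, ∑ q : ZMod d,
      O p q * ((starRingEnd ℂ) (A d m p q) * A d m k l)
      = ∑ p : ZMod d, ∑ q : ZMod d, O p q * ∑ m : ZMod (2 * d) × ZMod (2 * d),
          (starRingEnd ℂ) (A d m p q) * A d m k l := by
    rw [Finset.sum_comm]
    refine Finset.sum_congr rfl fun p _ => ?_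
    rw [Finset.sum_comm]
    refine Finset.sum_congr rfl fun q _ => ?_
    rw [Finset.mul_sum]
  rw [hswap]
  simp_rw [A_complete]
  have hfin : ∑ p : ZMod d, ∑ q : ZMod d, O p q * (if p = k ∧ q = l then (4 * (d : ℂ)) else 0)
      = O k l * (4 * (d : ℂ)) := by
    have h1 : ∀ p : ZMod d, ∑ q : ZMod d, O p q * (if p = k ∧ q = l then (4 * (d : ℂ)) else 0)
        = if p = k then O p l * (4 * (d : ℂ)) else 0 := by
      intro p
      by_cases hp : p = k
      · subst hp
        rw [if_pos rfl, Finset.sum_eq_single l (fun q _ hq => by simp [hq])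
          (fun h => absurd (Finset.mem_univ _) h)]
        simp
      · rw [if_neg hp]
        exact Finset.sum_eq_zero fun q _ => by simp [hp]
    simp_rw [h1]
    rw [Finset.sum_eq_single k (fun p _ hp => by simp [hp])
      (fun h => absurd (Finset.mem_univ _) h), if_pos rfl]
  rw [hfin]
  have h4 : (4 : ℂ) * (d : ℂ) ≠ 0 := mul_ne_zero (by norm_num) hd
  have hr : (1 : ℂ)/2 * (1/(2*(d:ℂ)) * (O k l * (4*(d:ℂ)))) = O k l * ((4*(d:ℂ)) / (4*(d:ℂ))) := by
    ring
  rw [hr, div_self h4, mul_one]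

lemma trace_conj (X Y : Matrix (ZMod d) (ZMod d) ℂ) :
    (starRingEnd ℂ) ((Xᴴ * Y).trace) = (Yᴴ * X).trace := by
  rw [Matrix.trace, Matrix.trace]
  simp only [Matrix.diag_apply, Matrix.mul_apply, Matrix.conjTranspose_apply, map_sum,
    _root_.map_mul, RCLike.star_def, Complex.conj_conj]
  exact Finset.sum_congr rfl fun i _ => Finset.sum_congr rfl fun j _ => by ring

lemma P_apply (f : ZMod (2 * d) × ZMod (2 * d) → ℂ) (m : ZMod (2 * d) × ZMod (2 * d)) :
    P d f m = (1 / (4 * (d : ℂ))) * ∑ m' : ZMod (2 * d) × ZMod (2 * d),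
      f m' * ((A d m)ᴴ * A d m').trace := by
  have h1 : (A d m)ᴴ * OpW d f = (1/2 : ℂ) • ∑ m' : ZMod (2 * d) × ZMod (2 * d),
      f m' • ((A d m)ᴴ * A d m') := by
    rw [OpW, Matrix.mul_smul, Matrix.mul_sum]
    simp_rw [Matrix.mul_smul]
  rw [P, Wig, h1, Matrix.trace_smul, Matrix.trace_sum]
  simp_rw [Matrix.trace_smul, smul_eq_mul]
  rw [← mul_assoc]
  have h2 : (1:ℂ)/(2*(d:ℂ)) * (1/2) = 1/(4*(d:ℂ)) := by
    rw [div_mul_div_comm, one_mul]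
    congr 1
    ring
  rw [h2]

lemma P_idem (f : ZMod (2 * d) × ZMod (2 * d) → ℂ) : P d (P d f) = P d f := by
  show Wig d (OpW d (Wig d (OpW d f))) = Wig d (OpW d f)
  rw [opW_wig]

lemma P_selfadj (f g : ZMod (2 * d) × ZMod (2 * d) → ℂ) :
    ip d (P d f) g = ip d f (P d g) := by
  have hd : (d : ℂ) ≠ 0 := Nat.cast_ne_zero.mpr (NeZero.ne d)
  have hc : (starRingEnd ℂ) (1 / (4 * (d : ℂ))) = 1 / (4 * (d : ℂ)) := by
    rw [map_div₀, _root_.map_one, _root_.map_mul, Complex.conj_natCast, map_ofNat]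
  have L : ip d (P d f) g = (1 / (4 * (d : ℂ))) * ∑ m : ZMod (2 * d) × ZMod (2 * d),
      ∑ m' : ZMod (2 * d) × ZMod (2 * d),
        (starRingEnd ℂ) (f m') * ((A d m')ᴴ * A d m).trace * g m := by
    rw [ip, Finset.mul_sum]
    refine Finset.sum_congr rfl fun m _ => ?_
    rw [P_apply, _root_.map_mul, hc, map_sum]
    simp_rw [_root_.map_mul, trace_conj]
    rw [mul_assoc, Finset.sum_mul]
  have R : ip d f (P d g) = (1 / (4 * (d : ℂ))) * ∑ m' : ZMod (2 * d) × ZMod (2 * d),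
      ∑ m : ZMod (2 * d) × ZMod (2 * d),
        (starRingEnd ℂ) (f m') * ((A d m')ᴴ * A d m).trace * g m := by
    rw [ip, Finset.mul_sum]
    refine Finset.sum_congr rfl fun m' _ => ?_
    rw [P_apply, Finset.mul_sum, Finset.mul_sum, Finset.mul_sum]
    exact Finset.sum_congr rfl fun m _ => by ring
  rw [L, R, Finset.sum_comm]

end AuxProof

theorem stmt6 (d : ℕ) [NeZero d] :
    (∀ f : ZMod (2 * d) × ZMod (2 * d) → ℂ, P d (P d f) = P d f) ∧
    (∀ f g : ZMod (2 * d) × ZMod (2 * d) → ℂ, ip d (P d f) g = ip d f (P d g)) := by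
  exact ⟨fun f => P_idem d f, fun f g => P_selfadj d f g⟩
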